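/- Let P = C_1⋯C_ℓ be a path polyomino, K a field, R = K[y_1,…,y_ℓ], and let M_P ⊆ R be the monomial ideal generated by all products y_i y_j (1 ≤ i ≤ j ≤ ℓ, including i = j) such that the cells C_i and C_j lie in a common maximal cell interval of P. Then the socle soc(R/M_P) is concentrated in a single degree (i.e., all its nonzero homogeneous elements have the same degree) if and only if the rook complex ℛ_P is pure, i.e., every facet of ℛ_P has cardinality r(P). (Equivalently, R/in(J_P) is level if and only if ℛ_P is pure.) -/

import Mathlib

open MvPolynomial


/-- A cell of a polyomino, identified with its lower-left corner in `ℕ²`. -/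
abbrev Cell := ℕ × ℕ

/-- Two cells share an edge. -/
def cellAdj (c d : Cell) : Prop :=
  (c.1 = d.1 ∧ (c.2 + 1 = d.2 ∨ d.2 + 1 = c.2)) ∨
  (c.2 = d.2 ∧ (c.1 + 1 = d.1 ∨ d.1 + 1 = c.1))

/-- The four vertices of the unit square with lower-left corner `c`. -/
def cellVerts (c : Cell) : Finset (ℕ × ℕ) :=
  {c, (c.1 + 1, c.2), (c.1, c.2 + 1), (c.1 + 1, c.2 + 1)}

/-- The vertex set `V(P)` of a collection of cells. -/
def polyVerts (P : Finset Cell) : Finset (ℕ × ℕ) := P.biUnion cellVerts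

/-- Two cells are joined by a sequence of cells of `Q` in which consecutive cells
share an edge. -/
def connectedIn (Q : Set Cell) (c d : Cell) : Prop :=
  Relation.ReflTransGen (fun x y => x ∈ Q ∧ y ∈ Q ∧ cellAdj x y) c d

/-- A polyomino: a finite nonempty edge-connected set of cells. -/
def IsPolyomino (P : Finset Cell) : Prop :=
  P.Nonempty ∧ ∀ c ∈ P, ∀ d ∈ P, connectedIn (↑P) c d

/-- A polyomino is thin if it contains no 2×2 square tetromino. -/
def IsThin (P : Finset Cell) : Prop :=
  ¬ ∃ c : Cell, c ∈ P ∧ (c.1 + 1, c.2) ∈ P ∧ (c.1, c.2 + 1) ∈ P ∧ (c.1 + 1, c.2 + 1) ∈ P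

/-- A polyomino is simple if any two cells outside of it are connected by a path of
cells outside of it. -/
def IsSimplePoly (P : Finset Cell) : Prop :=
  IsPolyomino P ∧ ∀ c d : Cell, c ∉ P → d ∉ P → connectedIn {x : Cell | x ∉ P} c d

/-- Two (distinct) cells of `P` attack each other: they lie in a common row or column
of cells and all cells between them belong to `P`. -/
def Attacks (P : Finset Cell) (c d : Cell) : Prop :=
  c ≠ d ∧
  ((c.2 = d.2 ∧ ∀ t : ℕ, min c.1 d.1 ≤ t → t ≤ max c.1 d.1 → (t, c.2) ∈ P) ∨
   (c.1 = d.1 ∧ ∀ t : ℕ, min c.2 d.2 ≤ t → t ≤ max c.2 d.2 → (c.1, t) ∈ P))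

/-- `F` is a non-attacking set of cells (a configuration of non-attacking rooks) of `P`. -/
def NonAtt (P F : Finset Cell) : Prop :=
  F ⊆ P ∧ ∀ c ∈ F, ∀ d ∈ F, ¬ Attacks P c d

/-- A facet of the rook complex: a maximal non-attacking set of cells. -/
def IsFacet (P F : Finset Cell) : Prop :=
  NonAtt P F ∧ ∀ G : Finset Cell, NonAtt P G → F ⊆ G → G = F

/-- The rook number: the maximum cardinality of a non-attacking set of cells of `P`. -/
noncomputable def rookNumber (P : Finset Cell) : ℕ :=
  sSup {n : ℕ | ∃ F : Finset Cell, NonAtt P F ∧ F.card = n}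

/-- A maximal cell interval: a maximal set of pairwise attacking cells of `P`. -/
def IsMaxInterval (P I : Finset Cell) : Prop :=
  I.Nonempty ∧ I ⊆ P ∧ (∀ c ∈ I, ∀ d ∈ I, c ≠ d → Attacks P c d) ∧
  ∀ J : Finset Cell, J ⊆ P → (∀ c ∈ J, ∀ d ∈ J, c ≠ d → Attacks P c d) → I ⊆ J → J = I

/-- A cell of `P` is single if all cells of `P` attacking it lie, together with it,
in one common maximal cell interval. -/
def IsSingle (P : Finset Cell) (c : Cell) : Prop :=
  c ∈ P ∧ ∃ I : Finset Cell, IsMaxInterval P I ∧ c ∈ I ∧ ∀ d ∈ P, Attacks P c d → d ∈ I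

/-- `P` is a path polyomino with cells `C 1, …, C ℓ`. -/
def IsPathPoly (ℓ : ℕ) (C : ℕ → Cell) (P : Finset Cell) : Prop :=
  2 ≤ ℓ ∧
  P = (Finset.Icc 1 ℓ).image C ∧
  (∀ i ∈ Finset.Icc 1 ℓ, ∀ j ∈ Finset.Icc 1 ℓ, C i = C j → i = j) ∧
  (∀ i : ℕ, 1 ≤ i → i < ℓ → cellAdj (C i) (C (i + 1))) ∧
  (∀ i j : ℕ, 3 ≤ i → i + 2 ≤ ℓ → 1 ≤ j → j ≤ ℓ → (j + 2 < i ∨ i + 2 < j) →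
    Disjoint (cellVerts (C i)) (cellVerts (C j))) ∧
  IsThin P

/-- `I 1, …, I s` is the ordered sequence of the maximal cell intervals of a path
polyomino, consecutive ones intersecting. -/
def IsIntervalSeq (P : Finset Cell) (s : ℕ) (I : ℕ → Finset Cell) : Prop :=
  1 ≤ s ∧
  (∀ k ∈ Finset.Icc 1 s, IsMaxInterval P (I k)) ∧
  (∀ J : Finset Cell, IsMaxInterval P J → ∃ k ∈ Finset.Icc 1 s, J = I k) ∧
  (∀ k ∈ Finset.Icc 1 s, ∀ m ∈ Finset.Icc 1 s, I k = I m → k = m) ∧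
  (∀ k : ℕ, 1 ≤ k → k < s → ((I k) ∩ (I (k + 1))).Nonempty)

/-- The intervals `I (k+1), …, I (k+l)` form a stair of length `l` of a path polyomino
whose ordered maximal cell intervals are `I 1, …, I s`: all intermediate intervals have
length 2, and each extreme interval either has length `> 2` or is an end interval of
length 2. -/
def IsStairAt (s : ℕ) (I : ℕ → Finset Cell) (k l : ℕ) : Prop :=
  2 ≤ l ∧ k + l ≤ s ∧
  (∀ i : ℕ, k + 1 < i → i < k + l → (I i).card = 2) ∧
  (2 < (I (k + 1)).card ∨ (k = 0 ∧ (I (k + 1)).card = 2)) ∧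
  (2 < (I (k + l)).card ∨ (k + l = s ∧ (I (k + l)).card = 2))

/-- A bad stair is a stair of length 4, 6, or at least 8. -/
def HasBadStair (s : ℕ) (I : ℕ → Finset Cell) : Prop :=
  ∃ k l : ℕ, IsStairAt s I k l ∧ (l = 4 ∨ l = 6 ∨ 8 ≤ l)

variable (K : Type*) [Field K]

/-- The variables of the polynomial ring `R = K[y_1, …, y_ℓ]`. -/
abbrev RVar (ℓ : ℕ) := {i : ℕ // i ∈ Finset.Icc 1 ℓ}

/-- The squarefree monomial `y_F = ∏_{i ∈ T} y_i` associated to a set `T` of indices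
of cells. -/
noncomputable def yMon (ℓ : ℕ) (T : Finset ℕ) : MvPolynomial (RVar ℓ) K :=
  ∏ j ∈ Finset.univ.filter (fun j : RVar ℓ => (j : ℕ) ∈ T), X j

/-- The monomial ideal `M_P` generated by the products `y_i y_j` (`i = j` allowed) over
all pairs of cells `C_i, C_j` lying in a common maximal cell interval of `P`. -/
noncomputable def monIdeal (ℓ : ℕ) (C : ℕ → Cell) (P : Finset Cell) :
    Ideal (MvPolynomial (RVar ℓ) K) :=
  Ideal.span { f | ∃ i j : RVar ℓ,
    (∃ I : Finset Cell, IsMaxInterval P I ∧ C (i : ℕ) ∈ I ∧ C (j : ℕ) ∈ I) ∧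
    f = X i * X j }

/-!
Call two indices `i, j` related when `C_i` and `C_j` lie in a common maximal cell interval.
This relation is reflexive, and on distinct cells it is exactly attack. Since `M_P` is
generated by the `y_i y_j` over related pairs, `y^a ∉ M_P` iff `a` is squarefree with a
non-attacking support, and `y^a` is a socle monomial iff that support is moreover a maximal
non-attacking set, i.e. a facet of `ℛ_P`. Because `M_P` is a monomial ideal, a homogeneous socle
element has a socle monomial of the same degree in its support. So the socle degrees of
`R/M_P` are exactly the cardinalities of the facets of `ℛ_P`, and `r(P)` is one of them.
-/

theorem Attacks.symm {P : Finset Cell} {c d : Cell} (h : Attacks P c d) : Attacks P d c := by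
  obtain ⟨hne, ⟨hrow, hP⟩ | ⟨hcol, hP⟩⟩ := h
  · refine ⟨hne.symm, Or.inl ⟨hrow.symm, fun t h₁ h₂ => hrow ▸ hP t ?_ ?_⟩⟩
    · rwa [min_comm]
    · rwa [max_comm]
  · refine ⟨hne.symm, Or.inr ⟨hcol.symm, fun t h₁ h₂ => hcol ▸ hP t ?_ ?_⟩⟩
    · rwa [min_comm]
    · rwa [max_comm]

theorem exists_isMaxInterval_superset {P J : Finset Cell} (hJP : J ⊆ P) (hJ : J.Nonempty)
    (hatt : ∀ c ∈ J, ∀ d ∈ J, c ≠ d → Attacks P c d) :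
    ∃ I, IsMaxInterval P I ∧ J ⊆ I := by
  let S : Set (Finset Cell) := {I | I ⊆ P ∧ ∀ c ∈ I, ∀ d ∈ I, c ≠ d → Attacks P c d}
  have hS : S.Finite := P.powerset.finite_toSet.subset fun I hI => Finset.mem_powerset.2 hI.1
  obtain ⟨I, hJI, ⟨hIP, hIatt⟩, hmax⟩ := hS.exists_le_maximal (a := J) ⟨hJP, hatt⟩
  exact ⟨I, ⟨hJ.mono hJI, hIP, hIatt, fun K hKP hKatt hIK =>
    le_antisymm (hmax ⟨hKP, hKatt⟩ hIK) hIK⟩, hJI⟩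

def InCommonInterval (P : Finset Cell) (c d : Cell) : Prop :=
  ∃ I, IsMaxInterval P I ∧ c ∈ I ∧ d ∈ I

theorem inCommonInterval_self {P : Finset Cell} {c : Cell} (hc : c ∈ P) :
    InCommonInterval P c c := by
  obtain ⟨I, hI, hcI⟩ := exists_isMaxInterval_superset (J := {c}) (by simpa) (by simp) (by simp)
  exact ⟨I, hI, hcI (by simp), hcI (by simp)⟩

theorem attacks_iff_inCommonInterval {P : Finset Cell} {c d : Cell} (hc : c ∈ P) (hd : d ∈ P)
    (hne : c ≠ d) : Attacks P c d ↔ InCommonInterval P c d := by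
  refine ⟨fun h => ?_, fun ⟨I, hI, hcI, hdI⟩ => hI.2.2.1 c hcI d hdI hne⟩
  have hpair : ∀ x ∈ ({c, d} : Finset Cell), ∀ y ∈ ({c, d} : Finset Cell),
      x ≠ y → Attacks P x y := by
    simp only [Finset.mem_insert, Finset.mem_singleton]
    rintro x (rfl | rfl) y (rfl | rfl) hxy
    exacts [absurd rfl hxy, h, h.symm, absurd rfl hxy]
  obtain ⟨I, hI, hcdI⟩ := exists_isMaxInterval_superset
    (Finset.insert_subset hc (Finset.singleton_subset_iff.2 hd)) ⟨c, by simp⟩ hpair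
  exact ⟨I, hI, hcdI (by simp), hcdI (by simp)⟩

theorem isFacet_iff_maximal {P F : Finset Cell} : IsFacet P F ↔ Maximal (NonAtt P) F :=
  and_congr_right fun _ => forall_congr' fun _ => forall_congr' fun _ =>
    ⟨fun h hFG => (h hFG).le, fun h hFG => le_antisymm (h hFG) hFG⟩

theorem exists_isFacet_card_eq_rookNumber (P : Finset Cell) :
    ∃ F, IsFacet P F ∧ F.card = rookNumber P := by
  classical
  have hmem : ∀ {G}, NonAtt P G → G ∈ P.powerset.filter (NonAtt P) := fun hG => by
    simpa [hG] using hG.1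
  obtain ⟨F, hF, hmax⟩ := (P.powerset.filter (NonAtt P)).exists_max_image Finset.card
    ⟨∅, hmem ⟨Finset.empty_subset P, by simp⟩⟩
  replace hF := (Finset.mem_filter.1 hF).2
  refine ⟨F, ⟨hF, fun G hG hFG =>
    (Finset.eq_of_subset_of_card_le hFG (hmax G (hmem hG))).symm⟩, le_antisymm (le_csSup ⟨P.card, ?_⟩ ⟨F, hF, rfl⟩) (csSup_le ⟨_, F, hF, rfl⟩ ?_)⟩
  · rintro _ ⟨G, hG, rfl⟩
    exact Finset.card_le_card hG.1
  · rintro _ ⟨G, hG, rfl⟩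
    exact hmax G (hmem hG)

section PairIdeal

open Finsupp (single)

noncomputable def pairIdeal (R : Type*) [CommSemiring R] {σ : Type*} (r : σ → σ → Prop) :
    Ideal (MvPolynomial σ R) :=
  Ideal.span {f | ∃ i j, r i j ∧ f = X i * X j}

variable {σ : Type*} (r : σ → σ → Prop)

def IsPairMultiple (a : σ →₀ ℕ) : Prop :=
  ∃ i j, r i j ∧ single i 1 + single j 1 ≤ a

def IsIndep (S : Finset σ) : Prop :=
  (S : Set σ).Pairwise fun i j => ¬ r i j

def IsSocleExponent (a : σ →₀ ℕ) : Prop :=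
  ¬ IsPairMultiple r a ∧ ∀ j, IsPairMultiple r (single j 1 + a)

def IsSocleDegree {R : Type*} [CommSemiring R] (I : Ideal (MvPolynomial σ R)) (n : ℕ) : Prop :=
  ∃ f : MvPolynomial σ R, f.IsHomogeneous n ∧ f ∉ I ∧ ∀ j, X j * f ∈ I

variable {r}

theorem mem_pairIdeal_iff {R : Type*} [CommSemiring R] {f : MvPolynomial σ R} :
    f ∈ pairIdeal R r ↔ ∀ a ∈ f.support, IsPairMultiple r a := by
  have hgen : {f : MvPolynomial σ R | ∃ i j, r i j ∧ f = X i * X j} =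
      (monomial · 1) '' {a | ∃ i j, r i j ∧ a = single i 1 + single j 1} := by
    ext f
    simp [X, monomial_mul, eq_comm]
  rw [pairIdeal, hgen, mem_ideal_span_monomial_image]
  simp [IsPairMultiple]

theorem isPairMultiple_of_two_le (hr : ∀ i, r i i) {a : σ →₀ ℕ} {i : σ} (h : 2 ≤ a i) :
    IsPairMultiple r a :=
  ⟨i, i, hr i, by rwa [← Finsupp.single_add, Finsupp.single_le_iff]⟩

variable [DecidableEq σ]

theorem toFinsupp_val_apply (S : Finset σ) (i : σ) :
    S.val.toFinsupp i = if i ∈ S then 1 else 0 :=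
  Multiset.count_eq_of_nodup S.nodup

theorem isPairMultiple_toFinsupp_iff {S : Finset σ} :
    IsPairMultiple r S.val.toFinsupp ↔ ¬ IsIndep r S := by
  simp only [IsPairMultiple, IsIndep, Set.Pairwise, Finset.mem_coe, not_forall, not_not]
  constructor
  · rintro ⟨i, j, hij, hle⟩
    have hi := hle i
    have hj := hle j
    simp only [Finsupp.add_apply, Finsupp.single_apply, toFinsupp_val_apply] at hi hj
    by_cases h : i = j
    · subst h; grind
    · exact ⟨i, by grind, j, by grind, h, hij⟩
  · rintro ⟨i, hi, j, hj, hne, hij⟩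
    refine ⟨i, j, hij, fun k => ?_⟩
    simp only [Finsupp.add_apply, Finsupp.single_apply, toFinsupp_val_apply]
    grind

theorem single_add_toFinsupp_val {S : Finset σ} {j : σ} (hj : j ∉ S) :
    single j 1 + S.val.toFinsupp = (insert j S).val.toFinsupp := by
  rw [Finset.insert_val_of_notMem hj, ← Multiset.singleton_add, Multiset.toFinsupp_add,
    Multiset.toFinsupp_singleton]

theorem degree_toFinsupp_val (S : Finset σ) : S.val.toFinsupp.degree = S.card :=
  Multiset.toFinsupp_sum_eq S.val

theorem eq_toFinsupp_support (hr : ∀ i, r i i) {a : σ →₀ ℕ} (ha : ¬ IsPairMultiple r a) :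
    a = a.support.val.toFinsupp := by
  ext i
  have : a i < 2 := not_le.1 fun h => ha (isPairMultiple_of_two_le hr h)
  simp only [toFinsupp_val_apply, Finsupp.mem_support_iff]
  split_ifs <;> omega

theorem isSocleExponent_toFinsupp_iff (hr : ∀ i, r i i) (S : Finset σ) :
    IsSocleExponent r S.val.toFinsupp ↔ Maximal (IsIndep r) S := by
  have hdown : ∀ ⦃S T : Finset σ⦄, IsIndep r T → S ⊆ T → IsIndep r S :=
    fun _ _ hT hST => hT.mono (Finset.coe_subset.2 hST)
  rw [IsSocleExponent, isPairMultiple_toFinsupp_iff, not_not,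
    Finset.maximal_iff_forall_insert hdown]
  refine and_congr_right fun _ => ⟨fun h j hj => ?_, fun h j => ?_⟩
  · rw [← isPairMultiple_toFinsupp_iff, ← single_add_toFinsupp_val hj]
    exact h j
  · by_cases hj : j ∈ S
    · refine isPairMultiple_of_two_le hr (i := j) ?_
      rw [Finsupp.add_apply, Finsupp.single_eq_same, toFinsupp_val_apply, if_pos hj]
    · rw [single_add_toFinsupp_val hj, isPairMultiple_toFinsupp_iff]
      exact h j hj

theorem isSocleExponent_iff (hr : ∀ i, r i i) {a : σ →₀ ℕ} :
    IsSocleExponent r a ↔ ∃ S, Maximal (IsIndep r) S ∧ a = S.val.toFinsupp := by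
  refine ⟨fun ha => ⟨a.support, ?_, eq_toFinsupp_support hr ha.1⟩, ?_⟩
  · rw [← isSocleExponent_toFinsupp_iff hr, ← eq_toFinsupp_support hr ha.1]
    exact ha
  · rintro ⟨S, hS, rfl⟩
    exact (isSocleExponent_toFinsupp_iff hr S).2 hS

theorem isSocleDegree_pairIdeal_iff {R : Type*} [CommSemiring R] [Nontrivial R]
    (hr : ∀ i, r i i) {n : ℕ} :
    IsSocleDegree (pairIdeal R r) n ↔ ∃ S, Maximal (IsIndep r) S ∧ S.card = n := by
  have hmon : ∀ a, monomial a (1 : R) ∈ pairIdeal R r ↔ IsPairMultiple r a := fun a => by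
    simp [mem_pairIdeal_iff]
  constructor
  · rintro ⟨f, hf, hfI, hXf⟩
    obtain ⟨a, ha, hna⟩ : ∃ a ∈ f.support, ¬ IsPairMultiple r a := by
      simpa [mem_pairIdeal_iff] using hfI
    have hXa : ∀ j, IsPairMultiple r (single j 1 + a) := fun j =>
      mem_pairIdeal_iff.1 (hXf j) _ (by simpa [mem_support_iff] using ha)
    obtain ⟨S, hS, rfl⟩ := (isSocleExponent_iff hr).1 ⟨hna, hXa⟩
    refine ⟨S, hS, ?_⟩
    rw [← degree_toFinsupp_val, Finsupp.degree_eq_weight_one]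
    exact hf (mem_support_iff.1 ha)
  · rintro ⟨S, hS, rfl⟩
    obtain ⟨hna, hXa⟩ := (isSocleExponent_iff hr).2 ⟨S, hS, rfl⟩
    refine ⟨monomial S.val.toFinsupp 1, isHomogeneous_monomial _ (degree_toFinsupp_val S),
      (hmon _).not.2 hna, fun j => ?_⟩
    rw [X, monomial_mul, one_mul, hmon]
    exact hXa j

end PairIdeal

section Embedding

variable {σ : Type*} [Fintype σ] {P : Finset Cell} (e : σ ↪ Cell)

theorem nonAtt_map_iff (hP : P = Finset.univ.map e) (S : Finset σ) :
    NonAtt P (S.map e) ↔ IsIndep (fun i j => InCommonInterval P (e i) (e j)) S := by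
  have hmem : ∀ i, e i ∈ P := fun i => hP ▸ Finset.mem_map_of_mem e (Finset.mem_univ i)
  have hsub : S.map e ⊆ P := hP ▸ Finset.map_subset_map.2 (Finset.subset_univ S)
  simp only [NonAtt, hsub, true_and, IsIndep, Set.Pairwise, Finset.mem_coe,
    Finset.forall_mem_map]
  refine forall₂_congr fun i _ => forall₂_congr fun j _ => ?_
  by_cases hij : i = j
  · subst hij
    simp [Attacks]
  · rw [attacks_iff_inCommonInterval (hmem i) (hmem j) (e.injective.ne hij)]
    simp [hij]

theorem isFacet_map_iff (hP : P = Finset.univ.map e) (S : Finset σ) :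
    IsFacet P (S.map e) ↔ Maximal (IsIndep fun i j => InCommonInterval P (e i) (e j)) S := by
  have hrange : {F | NonAtt P F} ⊆ Set.range (Finset.mapEmbedding e) := fun F hF => by
    obtain ⟨S, -, rfl⟩ := Finset.subset_map_iff.1 (hF.1.trans hP.le)
    exact ⟨S, rfl⟩
  have hNA : (fun S => NonAtt P (S.map e)) = IsIndep fun i j => InCommonInterval P (e i) (e j) :=
    funext fun S => propext (nonAtt_map_iff e hP S)
  rw [isFacet_iff_maximal, ← hNA]
  exact (Finset.mapEmbedding e).maximal_apply_mem_iff hrange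

theorem exists_isFacet_card_iff (hP : P = Finset.univ.map e) (n : ℕ) :
    (∃ F, IsFacet P F ∧ F.card = n) ↔
      ∃ S, Maximal (IsIndep fun i j => InCommonInterval P (e i) (e j)) S ∧ S.card = n := by
  constructor
  · rintro ⟨F, hF, rfl⟩
    obtain ⟨S, -, rfl⟩ := Finset.subset_map_iff.1 (hF.1.1.trans hP.le)
    exact ⟨S, (isFacet_map_iff e hP S).1 hF, (Finset.card_map e).symm⟩
  · rintro ⟨S, hS, rfl⟩
    exact ⟨S.map e, (isFacet_map_iff e hP S).2 hS, Finset.card_map e⟩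

end Embedding

/-- For a path polyomino `P = C_1 ⋯ C_ℓ`, the socle of `R/M_P` is
concentrated in a single degree iff the rook complex of `P` is pure (every facet has
cardinality `r(P)`). -/
theorem statement9 (ℓ : ℕ) (C : ℕ → Cell) (P : Finset Cell) (hP : IsPathPoly ℓ C P) :
    (∀ (f g : MvPolynomial (RVar ℓ) K) (d e : ℕ),
      f.IsHomogeneous d → g.IsHomogeneous e →
      f ∉ monIdeal K ℓ C P → g ∉ monIdeal K ℓ C P →
      (∀ j : RVar ℓ, X j * f ∈ monIdeal K ℓ C P) →
      (∀ j : RVar ℓ, X j * g ∈ monIdeal K ℓ C P) → d = e) ↔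
    (∀ F : Finset Cell, IsFacet P F → F.card = rookNumber P) := by
  obtain ⟨-, hPC, hCinj, -, -, -⟩ := hP
  let cell : RVar ℓ ↪ Cell := ⟨fun i => C i, fun i j h => Subtype.ext (hCinj _ i.2 _ j.2 h)⟩
  have hPcell : P = Finset.univ.map cell := by
    ext c
    simp only [hPC, Finset.mem_image, Finset.mem_map, Finset.mem_univ, true_and, Subtype.exists]
    exact ⟨fun ⟨i, hi, hc⟩ => ⟨i, hi, hc⟩, fun ⟨i, hi, hc⟩ => ⟨i, hi, hc⟩⟩
  have hsocle : ∀ n, IsSocleDegree (monIdeal K ℓ C P) n ↔ ∃ F, IsFacet P F ∧ F.card = n :=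
    fun n => (isSocleDegree_pairIdeal_iff (r := fun i j => InCommonInterval P (cell i) (cell j))
      fun i => inCommonInterval_self (hPC ▸ Finset.mem_image_of_mem C i.prop)).trans
        (exists_isFacet_card_iff cell hPcell n).symm
  obtain ⟨F₀, hF₀, hF₀card⟩ := exists_isFacet_card_eq_rookNumber P
  constructor
  · intro h F hF
    obtain ⟨f, hf, hfM, hXf⟩ := (hsocle _).2 ⟨F, hF, rfl⟩
    obtain ⟨g, hg, hgM, hXg⟩ := (hsocle _).2 ⟨F₀, hF₀, rfl⟩
    exact (h f g _ _ hf hg hfM hgM hXf hXg).trans hF₀card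
  · intro h f g d e hf hg hfM hgM hXf hXg
    obtain ⟨F, hF, rfl⟩ := (hsocle d).1 ⟨f, hf, hfM, hXf⟩
    obtain ⟨G, hG, rfl⟩ := (hsocle e).1 ⟨g, hg, hgM, hXg⟩
    rw [h F hF, h G hG]
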